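/- Let T ∈ M_n(ℂ) be positive definite. Then for every S ∈ M_n(ℂ) there exists exactly one X ∈ M_n(ℂ) satisfying ∫₀¹ T^s X T^{1−s} ds = S, this X satisfies tr(T·X) = tr(S), and if S is Hermitian then X is Hermitian. -/

import Mathlib

open Matrix MeasureTheory
open scoped ComplexOrder

attribute [local instance] Matrix.frobeniusNormedAddCommGroup Matrix.frobeniusNormedSpace

/-- Functional calculus for a matrix: apply `f : ℝ → ℝ` to a Hermitian matrix `A` via its
spectral decomposition (junk value `0` if `A` is not Hermitian). -/
noncomputable def hcfc {n : ℕ} (f : ℝ → ℝ) (A : Matrix (Fin n) (Fin n) ℂ) :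
    Matrix (Fin n) (Fin n) ℂ :=
  if hA : A.IsHermitian then
    (hA.eigenvectorUnitary : Matrix (Fin n) (Fin n) ℂ) *
      Matrix.diagonal (fun i => (f (hA.eigenvalues i) : ℂ)) *
      star (hA.eigenvectorUnitary : Matrix (Fin n) (Fin n) ℂ)
  else 0

/-- The power `T^s` of a positive (semi)definite matrix via functional calculus. -/
noncomputable def psdPow {n : ℕ} (T : Matrix (Fin n) (Fin n) ℂ) (s : ℝ) :
    Matrix (Fin n) (Fin n) ℂ :=
  hcfc (fun x => x ^ s) T

/-! Diagonalize `T = U diag(λ) U⋆`. In that eigenbasis the operator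
`X ↦ ∫₀¹ T^s X T^{1-s} ds` is Schur multiplication by the matrix of logarithmic means
`∫₀¹ λᵢ^s λⱼ^{1-s} ds`, whose entries are positive, symmetric in `i, j` and equal to `λᵢ`
on the diagonal. Hence the operator is bijective, commutes with `X ↦ Xᴴ`, and the trace
of its value at `X` is `tr(T X)`. -/

open Unitary

namespace Matrix

variable {m n α : Type*}

theorem diagonal_mul_mul_diagonal [Fintype m] [Fintype n] [DecidableEq m] [DecidableEq n]
    [CommSemiring α] (d : m → α) (e : n → α) (Y : Matrix m n α) :
    diagonal d * Y * diagonal e = vecMulVec d e ⊙ Y := by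
  ext i j
  simp only [mul_diagonal, diagonal_mul, hadamard_apply, vecMulVec_apply]
  ring

theorem hadamard_left_bijective [GroupWithZero α] {C : Matrix m n α} (hC : ∀ i j, C i j ≠ 0) :
    Function.Bijective (C ⊙ ·) := by
  refine Function.bijective_iff_has_inverse.2 ⟨(C.map (·⁻¹) ⊙ ·), fun Y => ?_, fun Y => ?_⟩ <;>
    ext i j <;> simp [hadamard_apply, hC]

theorem integral_apply [Fintype m] [Fintype n] {X 𝕜 : Type*} [MeasurableSpace X]
    {μ : Measure X} [RCLike 𝕜] {F : X → Matrix m n 𝕜}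
    (hF : ∀ i j, Integrable (fun x => F x i j) μ) (i : m) (j : n) :
    (∫ x, F x ∂μ) i j = ∫ x, F x i j ∂μ := by
  let e : Matrix m n 𝕜 ≃L[𝕜] (m → n → 𝕜) := (ofLinearEquiv 𝕜).symm.toContinuousLinearEquiv
  have he : ∀ i j, Integrable (fun x => e (F x) i j) μ := hF
  calc (∫ x, F x ∂μ) i j = e (∫ x, F x ∂μ) i j := rfl
    _ = (∫ x, e (F x) ∂μ) i j := congrFun (congrFun (e.integral_comp_comm F).symm i) j
    _ = ∫ x, F x i j ∂μ := by
      rw [eval_integral (fun i => integrable_pi_iff.2 (he i)), eval_integral (he i)]; rfl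

section Square

variable [Fintype n] [DecidableEq n]

theorem trace_hadamard [NonUnitalNonAssocSemiring α] (C Y : Matrix n n α) :
    trace (C ⊙ Y) = trace (diagonal C.diag * Y) := by
  simp [trace, diagonal_mul, hadamard_apply]

variable [CommSemiring α] [StarRing α] (U : unitary (Matrix n n α))

theorem trace_conjStarAlgAut (A : Matrix n n α) : trace (conjStarAlgAut α _ U A) = trace A := by
  rw [conjStarAlgAut_apply, trace_mul_cycle, coe_star_mul_self, one_mul]

theorem trace_conjStarAlgAut_hadamard (C X : Matrix n n α) :
    trace (conjStarAlgAut α _ U (C ⊙ (conjStarAlgAut α _ U).symm X)) =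
      trace (conjStarAlgAut α _ U (diagonal C.diag) * X) := by
  conv_lhs => rw [trace_conjStarAlgAut, trace_hadamard, ← trace_conjStarAlgAut U]
  rw [map_mul, StarAlgEquiv.apply_symm_apply]

theorem star_conjStarAlgAut_hadamard {C : Matrix n n α} (hC : C.IsHermitian)
    (X : Matrix n n α) :
    star (conjStarAlgAut α _ U (C ⊙ (conjStarAlgAut α _ U).symm X)) =
      conjStarAlgAut α _ U (C ⊙ (conjStarAlgAut α _ U).symm (star X)) := by
  rw [← map_star, map_star (conjStarAlgAut α _ U).symm, star_eq_conjTranspose,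
    conjTranspose_hadamard, hC.eq, hadamard_comm, star_eq_conjTranspose]

end Square

end Matrix

/-- For `a ≠ b` this is the logarithmic mean `(a - b) / (log a - log b)`. -/
noncomputable def logMean (a b : ℝ) : ℝ :=
  ∫ s in (0 : ℝ)..1, a ^ s * b ^ (1 - s)

theorem logMean_pos {a b : ℝ} (ha : 0 < a) (hb : 0 < b) : 0 < logMean a b := by
  have hcont : Continuous fun s : ℝ => a ^ s * b ^ (1 - s) := by
    fun_prop (disch := positivity)
  exact intervalIntegral.intervalIntegral_pos_of_pos (hcont.intervalIntegrable 0 1)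
    (fun s => by positivity) one_pos

theorem logMean_comm (a b : ℝ) : logMean a b = logMean b a := by
  have := intervalIntegral.integral_comp_sub_left (fun s : ℝ => b ^ s * a ^ (1 - s)) (1 : ℝ)
    (a := 0) (b := 1)
  simp only [sub_sub_cancel, sub_zero, sub_self] at this
  simp only [logMean, ← this, mul_comm]

theorem logMean_self {a : ℝ} (ha : 0 < a) : logMean a a = a := by
  simp [logMean, ← Real.rpow_add ha]

noncomputable def logMeanMatrix {n 𝕜 : Type*} [RCLike 𝕜] (d : n → ℝ) : Matrix n n 𝕜 :=
  of fun i j => (logMean (d i) (d j) : 𝕜)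

section logMeanMatrix

variable {n 𝕜 : Type*} [RCLike 𝕜] {d : n → ℝ}

theorem logMeanMatrix_apply_ne_zero (hd : ∀ i, 0 < d i) (i j : n) :
    (logMeanMatrix d : Matrix n n 𝕜) i j ≠ 0 :=
  RCLike.ofReal_ne_zero.2 (logMean_pos (hd i) (hd j)).ne'

theorem isHermitian_logMeanMatrix (d : n → ℝ) :
    (logMeanMatrix d : Matrix n n 𝕜).IsHermitian := by
  ext i j
  simp [logMeanMatrix, logMean_comm]

theorem diag_logMeanMatrix (hd : ∀ i, 0 < d i) :
    (logMeanMatrix d : Matrix n n 𝕜).diag = RCLike.ofReal ∘ d := by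
  ext i
  simp [logMeanMatrix, logMean_self (hd i)]

end logMeanMatrix

theorem hcfc_of_isHermitian {n : ℕ} {A : Matrix (Fin n) (Fin n) ℂ} (hA : A.IsHermitian)
    (f : ℝ → ℝ) :
    hcfc f A = conjStarAlgAut ℂ _ hA.eigenvectorUnitary
      (diagonal fun i => (f (hA.eigenvalues i) : ℂ)) := by
  rw [hcfc, dif_pos hA, conjStarAlgAut_apply]

theorem setIntegral_psdPow_mul_mul_psdPow {n : ℕ} {T : Matrix (Fin n) (Fin n) ℂ} (hT : T.PosDef)
    (X : Matrix (Fin n) (Fin n) ℂ) :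
    ∫ s in Set.Icc (0 : ℝ) 1, psdPow T s * X * psdPow T (1 - s) =
      conjStarAlgAut ℂ _ hT.1.eigenvectorUnitary (logMeanMatrix hT.1.eigenvalues ⊙
        (conjStarAlgAut ℂ _ hT.1.eigenvectorUnitary).symm X) := by
  set V := conjStarAlgAut ℂ _ hT.1.eigenvectorUnitary
  set ev := hT.1.eigenvalues
  set Y := V.symm X
  set K : ℝ → Matrix (Fin n) (Fin n) ℂ := fun s =>
    vecMulVec (fun i => ((ev i ^ s : ℝ) : ℂ)) (fun j => ((ev j ^ (1 - s) : ℝ) : ℂ)) ⊙ Y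
  have h_integrand (s : ℝ) : psdPow T s * X * psdPow T (1 - s) = V (K s) := by
    rw [psdPow, psdPow, hcfc_of_isHermitian hT.1, hcfc_of_isHermitian hT.1,
      ← V.apply_symm_apply X, ← map_mul, ← map_mul, diagonal_mul_mul_diagonal]
  have h_entry (i j : Fin n) (s : ℝ) :
      K s i j = ((ev i ^ s * ev j ^ (1 - s) : ℝ) : ℂ) * Y i j := by
    simp [K, hadamard_apply, vecMulVec_apply]
  have hK_cont (i j : Fin n) : Continuous fun s => K s i j := by
    simp only [h_entry]
    fun_prop (disch := exact (hT.eigenvalues_pos _).ne')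
  have hK : ∫ s in Set.Icc (0 : ℝ) 1, K s = logMeanMatrix ev ⊙ Y := by
    ext i j
    rw [integral_apply fun k l => (hK_cont k l).integrableOn_Icc]
    simp_rw [h_entry, integral_mul_const, integral_complex_ofReal, integral_Icc_eq_integral_Ioc,
      ← intervalIntegral.integral_of_le zero_le_one]
    rfl
  simp_rw [h_integrand]
  rw [← hK]
  exact (V.toAlgEquiv.toLinearEquiv.toContinuousLinearEquiv).integral_comp_comm K

/-- For a positive definite matrix `T`, the integral equation `∫₀¹ T^s X T^{1−s} ds = S` has a
unique solution `X` for every `S`; this solution satisfies `tr(T·X) = tr(S)`, and it is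
Hermitian whenever `S` is Hermitian. -/
theorem integral_equation_unique_solution {n : ℕ} (T : Matrix (Fin n) (Fin n) ℂ)
    (hT : T.PosDef) (S : Matrix (Fin n) (Fin n) ℂ) :
    (∃! X : Matrix (Fin n) (Fin n) ℂ,
        (∫ s in Set.Icc (0:ℝ) 1, psdPow T s * X * psdPow T (1 - s)) = S) ∧
      ∀ X : Matrix (Fin n) (Fin n) ℂ,
        (∫ s in Set.Icc (0:ℝ) 1, psdPow T s * X * psdPow T (1 - s)) = S →
          (Matrix.trace (T * X) = Matrix.trace S ∧ (S.IsHermitian → X.IsHermitian)) := by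
  simp_rw [setIntegral_psdPow_mul_mul_psdPow hT]
  set V := conjStarAlgAut ℂ _ hT.1.eigenvectorUnitary
  have h_bij : Function.Bijective fun X => V (logMeanMatrix hT.1.eigenvalues ⊙ V.symm X) :=
    V.bijective.comp <| (hadamard_left_bijective <|
      logMeanMatrix_apply_ne_zero hT.eigenvalues_pos).comp V.symm.bijective
  refine ⟨h_bij.existsUnique S, fun X hX => ⟨?_, fun hS => h_bij.injective ?_⟩⟩
  · rw [← hX, trace_conjStarAlgAut_hadamard, diag_logMeanMatrix hT.eigenvalues_pos,
      ← hT.1.spectral_theorem]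
  · rw [← star_eq_conjTranspose,
      ← star_conjStarAlgAut_hadamard _ (isHermitian_logMeanMatrix _), hX, star_eq_conjTranspose,
      hS.eq]
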